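/- arXiv:1009.4613 — 2 statements merged into one kernel-verified Lean document; each statement's English description precedes it below -/
import Mathlib

section
/- Fix t > 0 and x ∈ ℝ. For an integer n ≥ 1 and a continuous function w : [0,1] → ℝ with w(0) = 0, let G_n(w) = exp(−(1/2)(sinh(2t/n)/cosh(2t/n)) ∑_{j=0}^{n−1} ((n sinh(2t/n))^{1/2} w(j/n) + x/cosh(2t/n)^{j})²). Then for every such w one has 0 ≤ G_n(w) ≤ 1 and lim_{n→∞} G_n(w) = exp(−t ∫₀¹ (x + √(2t) w(s))² ds). -/
open MeasureTheory Real Filter Topology Finset Set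

/-! The exponent of `G n` factors as `n sinh(2t/n) / (2 cosh(2t/n))`, which tends to `t`, times
the average `(1/n) ∑_{j<n} (√(n sinh(2t/n)) w(j/n) + x / cosh(2t/n)^j)²`. Since
`n sinh(2t/n) → 2t` and `1 ≤ cosh(2t/n)^j ≤ cosh(2t/n)^n ≤ exp(2t²/n)` for `j ≤ n`, the summands
are uniformly close to `(x + √(2t) w(j/n))²`, so the average has the same limit as the Riemann
sums of this continuous function, namely its integral over `[0,1]`. -/

lemma abs_riemannSum_sub_integral_le {h : ℝ → ℝ} (hh : ContinuousOn h (Icc 0 1)) {n : ℕ}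
    (hn : 0 < n) {ε : ℝ}
    (hε : ∀ s ∈ Icc (0 : ℝ) 1, ∀ s' ∈ Icc (0 : ℝ) 1, dist s s' ≤ 1 / n → dist (h s) (h s') ≤ ε) :
    |(∑ j ∈ range n, h (j / n)) / n - ∫ s in (0 : ℝ)..1, h s| ≤ ε := by
  have hn' : (0 : ℝ) < n := Nat.cast_pos.2 hn
  set a : ℕ → ℝ := fun j => j / n with ha
  have hstep : ∀ j, a (j + 1) - a j = 1 / n := fun j => by simp only [ha]; push_cast; ring
  have hcell : ∀ j < n, Icc (a j) (a (j + 1)) ⊆ Icc 0 1 := fun j hj =>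
    Icc_subset_Icc (by positivity) <| by
      rw [div_le_one hn']; exact_mod_cast hj
  have hle : ∀ j, a j ≤ a (j + 1) := fun j => by linarith [hstep j, one_div_pos.2 hn']
  have hint : ∀ j < n, IntervalIntegrable h volume (a j) (a (j + 1)) := fun j hj =>
    (hh.mono <| by rw [Set.uIcc_of_le (hle j)]; exact hcell j hj).intervalIntegrable
  have hcell_err : ∀ j < n, |h (a j) / n - ∫ s in a j..a (j + 1), h s| ≤ ε / n := by
    intro j hj
    have hconst : h (a j) / n = ∫ _ in a j..a (j + 1), h (a j) := by
      rw [intervalIntegral.integral_const, hstep, smul_eq_mul]; ring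
    rw [hconst, ← intervalIntegral.integral_sub intervalIntegrable_const (hint j hj)]
    have hclose : ∀ s ∈ uIoc (a j) (a (j + 1)), ‖h (a j) - h s‖ ≤ ε := by
      intro s hs
      rw [uIoc_of_le (hle j)] at hs
      refine hε _ (hcell j hj ⟨le_rfl, hle j⟩) _ (hcell j hj (Ioc_subset_Icc_self hs)) ?_
      rw [dist_comm, dist_eq, abs_of_nonneg (by linarith [hs.1])]
      linarith [hstep j, hs.2]
    refine (intervalIntegral.norm_integral_le_of_norm_le_const hclose).trans_eq ?_
    rw [hstep, abs_of_pos (one_div_pos.2 hn')]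
    ring
  have htotal : ∑ j ∈ range n, ∫ s in a j..a (j + 1), h s = ∫ s in (0 : ℝ)..1, h s := by
    rw [intervalIntegral.sum_integral_adjacent_intervals hint]
    simp [ha, hn'.ne']
  calc |(∑ j ∈ range n, h (j / n)) / n - ∫ s in (0 : ℝ)..1, h s|
      = |∑ j ∈ range n, (h (a j) / n - ∫ s in a j..a (j + 1), h s)| := by
        rw [← htotal, sum_sub_distrib, ← sum_div]
    _ ≤ ∑ _j ∈ range n, ε / n :=
        (abs_sum_le_sum_abs _ _).trans <| sum_le_sum fun j hj => hcell_err j (mem_range.1 hj)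
    _ = ε := by rw [sum_const, card_range, nsmul_eq_mul]; field_simp

lemma tendsto_riemannSum {h : ℝ → ℝ} (hh : ContinuousOn h (Icc 0 1)) :
    Tendsto (fun n : ℕ => (∑ j ∈ range n, h (j / n)) / n) atTop
      (𝓝 (∫ s in (0 : ℝ)..1, h s)) := by
  have hu := Metric.uniformContinuousOn_iff_le.1
    (isCompact_Icc.uniformContinuousOn_of_continuous hh)
  refine Metric.tendsto_atTop.2 fun ε hε => ?_
  obtain ⟨δ, hδ, hδε⟩ := hu (ε / 2) (half_pos hε)
  obtain ⟨N, hN⟩ := exists_nat_one_div_lt hδ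
  refine ⟨N + 1, fun n hn => ?_⟩
  have hmesh : 1 / (n : ℝ) ≤ δ := by
    refine le_trans ?_ hN.le
    gcongr
    exact_mod_cast hn
  rw [dist_eq]
  exact (abs_riemannSum_sub_integral_le hh (by omega) fun s hs s' hs' hss' =>
    hδε s hs s' hs' (hss'.trans hmesh)).trans_lt (half_lt_self hε)

lemma tendsto_avg_of_abs_sub_le {h : ℝ → ℝ} (hh : ContinuousOn h (Icc 0 1)) {F : ℕ → ℕ → ℝ}
    {δ : ℕ → ℝ} (hδ : Tendsto δ atTop (𝓝 0)) (hF : ∀ n, ∀ j < n, |F n j - h (j / n)| ≤ δ n) :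
    Tendsto (fun n : ℕ => (∑ j ∈ range n, F n j) / n) atTop (𝓝 (∫ s in (0 : ℝ)..1, h s)) := by
  have hdiff : Tendsto (fun n : ℕ => (∑ j ∈ range n, F n j) / n - (∑ j ∈ range n, h (j / n)) / n)
      atTop (𝓝 0) := by
    refine squeeze_zero_norm' ?_ hδ
    filter_upwards [eventually_gt_atTop 0] with n hn
    have hn' : (0 : ℝ) < n := Nat.cast_pos.2 hn
    rw [norm_eq_abs, ← sub_div, ← sum_sub_distrib, abs_div, abs_of_pos hn', div_le_iff₀ hn']
    calc |∑ j ∈ range n, (F n j - h (j / n))| ≤ ∑ _j ∈ range n, δ n :=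
          (abs_sum_le_sum_abs _ _).trans <| sum_le_sum fun j hj => hF n j (mem_range.1 hj)
      _ = δ n * n := by rw [sum_const, card_range, nsmul_eq_mul, mul_comm]
  simpa using (tendsto_riemannSum hh).add hdiff

lemma abs_sq_sub_sq_le (u v : ℝ) : |u ^ 2 - v ^ 2| ≤ |u - v| * (|u - v| + 2 * |v|) := by
  calc |u ^ 2 - v ^ 2| = |u - v| * |(u - v) + 2 * v| := by rw [← abs_mul]; ring_nf
    _ ≤ |u - v| * (|u - v| + 2 * |v|) := by
      gcongr
      exact (abs_add_le _ _).trans_eq (by rw [abs_mul, abs_two])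

lemma abs_div_pow_sub_self_le {r : ℝ} (hr : 1 ≤ r) {j n : ℕ} (hjn : j ≤ n) (x : ℝ) :
    |x / r ^ j - x| ≤ |x| * (1 - (r ^ n)⁻¹) := by
  have hinv : (r ^ n)⁻¹ ≤ (r ^ j)⁻¹ := inv_anti₀ (by positivity) (pow_le_pow_right₀ hr hjn)
  have hinv_le_one : (r ^ j)⁻¹ ≤ 1 := inv_le_one_of_one_le₀ (one_le_pow₀ hr)
  rw [div_eq_mul_inv, ← mul_sub_one, abs_mul, abs_of_nonpos (a := (r ^ j)⁻¹ - 1) (by linarith)]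
  gcongr
  linarith

lemma tendsto_avg_sq_of_tendsto {w : ℝ → ℝ} (hw : ContinuousOn w (Icc 0 1)) (x : ℝ)
    {a : ℕ → ℝ} {A : ℝ} (ha : Tendsto a atTop (𝓝 A))
    {r : ℕ → ℝ} (hr : ∀ n, 1 ≤ r n) (hrn : Tendsto (fun n => r n ^ n) atTop (𝓝 1)) :
    Tendsto (fun n : ℕ => (∑ j ∈ range n, (a n * w (j / n) + x / r n ^ j) ^ 2) / n) atTop
      (𝓝 (∫ s in (0 : ℝ)..1, (x + A * w s) ^ 2)) := by
  obtain ⟨M, hM⟩ := isCompact_Icc.exists_bound_of_continuousOn hw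
  set C := |x| + |A| * M
  set η : ℕ → ℝ := fun n => |a n - A| * M + |x| * (1 - (r n ^ n)⁻¹)
  have hη : Tendsto η atTop (𝓝 0) := by
    have h₁ : Tendsto (fun n => |a n - A|) atTop (𝓝 0) := by simpa using (ha.sub_const A).abs
    have h₂ : Tendsto (fun n => 1 - (r n ^ n)⁻¹) atTop (𝓝 0) := by
      simpa using (hrn.inv₀ one_ne_zero).const_sub 1
    simpa using (h₁.mul_const M).add (h₂.const_mul |x|)
  have hw_le : ∀ n : ℕ, ∀ j < n, |w (j / n)| ≤ M := fun n j hj =>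
    hM _ ⟨by positivity, div_le_one_of_le₀ (by exact_mod_cast hj.le) (by positivity)⟩
  have hclose : ∀ n : ℕ, ∀ j < n,
      |(a n * w (j / n) + x / r n ^ j) - (x + A * w (j / n))| ≤ η n := by
    intro n j hj
    calc _ = |(a n - A) * w (j / n) + (x / r n ^ j - x)| := by ring_nf
      _ ≤ |a n - A| * M + |x| * (1 - (r n ^ n)⁻¹) := by
        refine (abs_add_le _ _).trans (add_le_add ?_ (abs_div_pow_sub_self_le (hr n) hj.le x))
        rw [abs_mul]
        exact mul_le_mul_of_nonneg_left (hw_le n j hj) (abs_nonneg _)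
  have hlimit_le : ∀ n : ℕ, ∀ j < n, |x + A * w (j / n)| ≤ C := fun n j hj =>
    (abs_add_le _ _).trans <| by
      rw [abs_mul]
      exact add_le_add le_rfl (mul_le_mul_of_nonneg_left (hw_le n j hj) (abs_nonneg _))
  refine tendsto_avg_of_abs_sub_le ((continuousOn_const.add (continuousOn_const.mul hw)).pow 2)
    (δ := fun n => η n * (η n + 2 * C)) (by simpa using hη.mul (hη.add_const (2 * C))) ?_
  intro n j hj
  have hη_nonneg : 0 ≤ η n := (abs_nonneg _).trans (hclose n j hj)
  refine (abs_sq_sub_sq_le _ _).trans ?_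
  gcongr
  exacts [hclose n j hj, hclose n j hj, hlimit_le n j hj]

lemma tendsto_nat_mul_sinh_div (c : ℝ) :
    Tendsto (fun n : ℕ => n * sinh (c / n)) atTop (𝓝 c) := by
  rcases eq_or_ne c 0 with rfl | hc
  · simp
  have hslope : Tendsto (fun y => y⁻¹ * sinh y) (𝓝[≠] 0) (𝓝 1) := by
    simpa using (hasDerivAt_sinh 0).tendsto_slope_zero
  have hcn : Tendsto (fun n : ℕ => c / n) atTop (𝓝[≠] 0) :=
    tendsto_nhdsWithin_of_tendsto_nhds_of_eventually_within _
      (tendsto_const_div_atTop_nhds_zero_nat c) <| by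
        filter_upwards [eventually_gt_atTop 0] with n hn
        exact div_ne_zero hc (by positivity)
  have hlim := (hslope.comp hcn).const_mul c
  rw [mul_one] at hlim
  refine hlim.congr' ?_
  filter_upwards [eventually_gt_atTop 0] with n hn
  simp only [Function.comp_apply]
  field_simp

lemma tendsto_cosh_div_pow (c : ℝ) :
    Tendsto (fun n : ℕ => cosh (c / n) ^ n) atTop (𝓝 1) := by
  have hup : Tendsto (fun n : ℕ => exp (c ^ 2 / 2 / n)) atTop (𝓝 1) := by
    simpa using (tendsto_const_div_atTop_nhds_zero_nat (c ^ 2 / 2)).rexp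
  refine tendsto_of_tendsto_of_tendsto_of_le_of_le' tendsto_const_nhds hup
    (.of_forall fun n => one_le_pow₀ (one_le_cosh _)) ?_
  filter_upwards [eventually_gt_atTop 0] with n hn
  calc cosh (c / n) ^ n ≤ exp ((c / n) ^ 2 / 2) ^ n :=
        pow_le_pow_left₀ (cosh_pos _).le (cosh_le_exp_half_sq _) n
    _ = exp (c ^ 2 / 2 / n) := by
        rw [← exp_nat_mul]
        field_simp

theorem Gn_le_one_and_tendsto_general
    (t : ℝ) (ht : 0 < t) (x : ℝ)
    (w : ℝ → ℝ) (hw : ContinuousOn w (Set.Icc 0 1)) :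
    let G : ℕ → ℝ := fun n => Real.exp (-(1 / 2) *
      (Real.sinh (2 * t / n) / Real.cosh (2 * t / n)) *
      ∑ j ∈ Finset.range n,
        (Real.sqrt ((n : ℝ) * Real.sinh (2 * t / n)) * w ((j : ℝ) / n) +
          x / Real.cosh (2 * t / n) ^ j) ^ 2)
    (∀ n : ℕ, 1 ≤ n → 0 ≤ G n ∧ G n ≤ 1) ∧
      Tendsto G atTop
        (𝓝 (Real.exp (-(t * ∫ s in (0:ℝ)..1, (x + Real.sqrt (2 * t) * w s) ^ 2)))) := by
  intro G
  refine ⟨fun n _ => ⟨(exp_pos _).le, ?_⟩, ?_⟩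
  · have htanh : 0 ≤ sinh (2 * t / n) / cosh (2 * t / n) :=
      div_nonneg (sinh_nonneg_iff.2 (by positivity)) (cosh_pos _).le
    have hexponent := mul_nonneg htanh (sum_nonneg fun j (_ : j ∈ range n) =>
      sq_nonneg (√(n * sinh (2 * t / n)) * w (j / n) + x / cosh (2 * t / n) ^ j))
    exact exp_le_one_iff.2 (by linarith)
  have hsum := tendsto_avg_sq_of_tendsto hw x
    ((continuous_sqrt.tendsto _).comp (tendsto_nat_mul_sinh_div (2 * t)))
    (fun n => one_le_cosh _) (tendsto_cosh_div_pow (2 * t))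
  have hcoef :
      Tendsto (fun n : ℕ => n * sinh (2 * t / n) / (2 * cosh (2 * t / n))) atTop (𝓝 t) := by
    have hcosh : Tendsto (fun n : ℕ => cosh (2 * t / n)) atTop (𝓝 1) := by
      simpa [Function.comp_def] using
        (continuous_cosh.tendsto 0).comp (tendsto_const_div_atTop_nhds_zero_nat (2 * t))
    have hlim := (tendsto_nat_mul_sinh_div (2 * t)).div (hcosh.const_mul 2) (by norm_num)
    rwa [mul_one, mul_div_cancel_left₀ t two_ne_zero] at hlim
  refine ((continuous_exp.tendsto _).comp (hcoef.mul hsum).neg).congr' ?_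
  filter_upwards [eventually_gt_atTop 0] with n hn
  simp only [Function.comp_apply, G]
  field_simp

/-- **Lemma (convergence of `G_n`).** For `t > 0`, `x ∈ ℝ` and `w` continuous on `[0,1]`
with `w(0) = 0`, the factor
`G_n(w) = exp(−(1/2)(sinh(2t/n)/cosh(2t/n)) ∑_{j=0}^{n−1} (√(n sinh(2t/n)) w(j/n) + x/cosh(2t/n)^j)²)`
satisfies `0 ≤ G_n(w) ≤ 1` and `G_n(w) → exp(−t ∫₀¹ (x + √(2t) w(s))² ds)` as `n → ∞`. -/
theorem Gn_le_one_and_tendsto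
    (t : ℝ) (ht : 0 < t) (x : ℝ)
    (w : ℝ → ℝ) (hw : ContinuousOn w (Set.Icc 0 1)) (hw0 : w 0 = 0) :
    let G : ℕ → ℝ := fun n => Real.exp (-(1 / 2) *
      (Real.sinh (2 * t / n) / Real.cosh (2 * t / n)) *
      ∑ j ∈ Finset.range n,
        (Real.sqrt ((n : ℝ) * Real.sinh (2 * t / n)) * w ((j : ℝ) / n) +
          x / Real.cosh (2 * t / n) ^ j) ^ 2)
    (∀ n : ℕ, 1 ≤ n → 0 ≤ G n ∧ G n ≤ 1) ∧
      Tendsto G atTop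
        (𝓝 (Real.exp (-(t * ∫ s in (0:ℝ)..1, (x + Real.sqrt (2 * t) * w s) ^ 2)))) :=
  Gn_le_one_and_tendsto_general t ht x w hw
end

section
/- Let v_0 be continuous and bounded on ℝ with v_0(x) → 0 as |x| → ∞, and let c be continuous and bounded on [0,∞)×ℝ, C¹ on (0,∞)×ℝ, with bounded continuous space derivatives up to order 4 on (0,∞)×ℝ. Then for all sufficiently small t > 0 (in particular 2t ≤ 1) and all x ∈ ℝ, the function v of the Feynman–Kac formula satisfies v(t,x) = ∫_{C_W} v_0(w(2t) + x) · exp(−(1/2) ∫₀^{2t} (x + w(s))² ds) · exp(−(1/2) ∫₀^{2t} c(t − s/2, w(s) + x) ds) dm_W(w). -/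
open MeasureTheory Real Filter Topology

noncomputable section


/-- The classical Wiener space: continuous functions on `[0,1]` vanishing at `0`. -/
def CW : Type := {w : C(Set.Icc (0:ℝ) 1, ℝ) // w ⟨0, by norm_num⟩ = 0}

instance : TopologicalSpace CW := by unfold CW; infer_instance
instance : MeasurableSpace CW := borel CW

/-- Evaluation of an element of the Wiener space at a time `s` (clamped to `[0,1]`). -/
def CW.eval (w : CW) (s : ℝ) : ℝ := w.1 (Set.projIcc (0:ℝ) 1 zero_le_one s)

/-- The value preceding index `i`, with the convention that it is `0` for `i = 0`. -/
def prevVal {n : ℕ} (v : Fin n → ℝ) (i : Fin n) : ℝ :=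
  if h : (i : ℕ) = 0 then 0 else v ⟨(i : ℕ) - 1, by have := i.isLt; omega⟩

/-- The normal (Gaussian) density of the finite-dimensional distributions of Brownian
motion at times `t 0 < t 1 < ⋯ < t (n-1)`. -/
def normalDensity {n : ℕ} (t : Fin n → ℝ) (ξ : Fin n → ℝ) : ℝ :=
  (Real.sqrt ((2 * π) ^ n * ∏ i, (t i - prevVal t i)))⁻¹ *
    Real.exp (-(1 / 2) * ∑ i, (ξ i - prevVal ξ i) ^ 2 / (t i - prevVal t i))

/-- `μ` is the Wiener measure: a probability measure on `CW` whose finite-dimensional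
distributions at times `0 < t 0 < t 1 < ⋯ < t (n-1) ≤ 1` have the normal density. -/
structure IsWienerMeasure (μ : Measure CW) : Prop where
  prob : IsProbabilityMeasure μ
  fdd : ∀ (n : ℕ) (t : Fin n → ℝ), StrictMono t → (∀ i, 0 < t i) → (∀ i, t i ≤ 1) →
    Measure.map (fun (w : CW) (i : Fin n) => w.eval (t i)) μ =
      MeasureTheory.volume.withDensity (fun ξ => ENNReal.ofReal (normalDensity t ξ))

/-- The Feynman–Kac type integral of the paper:
`S(v₀,c)(t,x) = ∫_{C_W} v₀(√(2t) w(1)+x) exp(−t∫₀¹ (x+√(2t)w(s))² ds)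
  exp(−t∫₀¹ c(t(1−s), √(2t)w(s)+x) ds) dm_W(w)`. -/
def wienerFK (μ : Measure CW) (v₀ : ℝ → ℝ) (c : ℝ → ℝ → ℝ) (t x : ℝ) : ℝ :=
  ∫ w : CW,
    v₀ (Real.sqrt (2 * t) * w.eval 1 + x) *
      Real.exp (-(t * ∫ s in (0:ℝ)..1, (x + Real.sqrt (2 * t) * w.eval s) ^ 2)) *
      Real.exp (-(t * ∫ s in (0:ℝ)..1,
        c (t * (1 - s)) (Real.sqrt (2 * t) * w.eval s + x))) ∂μ

/-! Brownian scaling: for `0 < a`, the process `√a · w(s)` has the same law as `w(a s)`, since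
the Gaussian densities of their finite-dimensional distributions agree after the linear change of
variables `ξ ↦ √a • ξ`. Both integrands of the theorem are bounded pointwise limits of
functions of finitely many values of the path (replace the time integrals by Riemann sums), so
bounded convergence transfers the identity from those cylinder functions to the integrands,
with `a = 2t`. -/

instance : BorelSpace CW := ⟨rfl⟩

namespace CW

@[fun_prop]
lemma continuous_eval_left (s : ℝ) : Continuous fun w : CW => w.eval s :=
  (continuous_id.eval_const _).comp continuous_subtype_val

@[fun_prop]
lemma continuous_eval_right (w : CW) : Continuous fun s => w.eval s :=
  (map_continuous w.1).comp continuous_projIcc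

end CW

section GaussianDensity

variable {n : ℕ}

lemma prevVal_const_mul (a : ℝ) (v : Fin n → ℝ) (i : Fin n) :
    prevVal (fun j => a * v j) i = a * prevVal v i := by
  unfold prevVal
  split_ifs <;> simp

lemma normalDensity_nonneg (τ ξ : Fin n → ℝ) : 0 ≤ normalDensity τ ξ := by
  unfold normalDensity
  positivity

@[fun_prop]
lemma continuous_prevVal (i : Fin n) : Continuous fun ξ : Fin n → ℝ => prevVal ξ i := by
  unfold prevVal
  split_ifs
  exacts [continuous_const, continuous_apply _]

lemma continuous_normalDensity (τ : Fin n → ℝ) : Continuous (normalDensity τ) := by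
  unfold normalDensity
  fun_prop

lemma normalDensity_const_mul (τ : Fin n → ℝ) {a : ℝ} (ha : 0 < a) (ξ : Fin n → ℝ) :
    normalDensity (fun i => a * τ i) (√a • ξ) = (√a ^ n)⁻¹ * normalDensity τ ξ := by
  have hsmul : √a • ξ = fun j => √a * ξ j := rfl
  have hquad (i : Fin n) :
      (√a * ξ i - √a * prevVal ξ i) ^ 2 / (a * τ i - a * prevVal τ i) =
        (ξ i - prevVal ξ i) ^ 2 / (τ i - prevVal τ i) := by
    rw [← mul_sub, ← mul_sub, mul_pow, Real.sq_sqrt ha.le, mul_div_mul_left _ _ ha.ne']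
  have hprod : ∏ i, (a * τ i - a * prevVal τ i) = (√a ^ n) ^ 2 * ∏ i, (τ i - prevVal τ i) := by
    simp_rw [← mul_sub, Finset.prod_mul_distrib, Finset.prod_const, Finset.card_univ,
      Fintype.card_fin, ← pow_mul, mul_comm n 2, pow_mul, Real.sq_sqrt ha.le]
  unfold normalDensity
  simp only [hsmul, prevVal_const_mul, hquad, hprod]
  rw [mul_left_comm, Real.sqrt_mul (by positivity), Real.sqrt_sq (by positivity), mul_inv,
    mul_assoc]

end GaussianDensity

def unitGrid (n : ℕ) (j : Fin (n + 1)) : ℝ := ((j : ℕ) + 1) / (n + 1)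

lemma unitGrid_pos (n : ℕ) (j : Fin (n + 1)) : 0 < unitGrid n j := by
  unfold unitGrid
  positivity

lemma unitGrid_le_one (n : ℕ) (j : Fin (n + 1)) : unitGrid n j ≤ 1 := by
  rw [unitGrid, div_le_one (by positivity)]
  exact_mod_cast j.isLt

lemma unitGrid_last (n : ℕ) : unitGrid n (Fin.last n) = 1 := by
  simp [unitGrid, Nat.cast_add_one_ne_zero]

lemma strictMono_unitGrid (n : ℕ) : StrictMono (unitGrid n) := fun i j hij => by
  unfold unitGrid
  gcongr
  exact_mod_cast hij

namespace IsWienerMeasure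

variable {μ : Measure CW} {n : ℕ}

lemma integral_comp_eval (hμ : IsWienerMeasure μ) {σ : Fin n → ℝ} (hmono : StrictMono σ)
    (hpos : ∀ i, 0 < σ i) (hle : ∀ i, σ i ≤ 1) {Ψ : (Fin n → ℝ) → ℝ} (hΨ : Measurable Ψ) :
    ∫ w, Ψ (fun i => w.eval (σ i)) ∂μ = ∫ ξ, normalDensity σ ξ * Ψ ξ := by
  have heval : Measurable fun (w : CW) (i : Fin n) => w.eval (σ i) :=
    measurable_pi_lambda _ fun i => (CW.continuous_eval_left _).measurable
  rw [← integral_map heval.aemeasurable hΨ.aestronglyMeasurable, hμ.fdd n σ hmono hpos hle,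
    integral_withDensity_eq_integral_toReal_smul
      (continuous_normalDensity σ).measurable.ennreal_ofReal
      (ae_of_all _ fun _ => ENNReal.ofReal_lt_top)]
  simp_rw [ENNReal.toReal_ofReal (normalDensity_nonneg σ _), smul_eq_mul]

lemma integral_comp_sqrt_mul_eval (hμ : IsWienerMeasure μ) {τ : Fin n → ℝ}
    (hmono : StrictMono τ) (hpos : ∀ i, 0 < τ i) (hle : ∀ i, τ i ≤ 1) {a : ℝ} (ha : 0 < a)
    (haτ : ∀ i, a * τ i ≤ 1) {Φ : (Fin n → ℝ) → ℝ} (hΦ : Measurable Φ) :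
    ∫ w, Φ (fun i => √a * w.eval (τ i)) ∂μ = ∫ w, Φ (fun i => w.eval (a * τ i)) ∂μ := by
  have hτ := hμ.integral_comp_eval hmono hpos hle (hΦ.comp (measurable_const_smul √a))
  have haτ' := hμ.integral_comp_eval (fun i j hij => mul_lt_mul_of_pos_left (hmono hij) ha)
    (fun i => mul_pos ha (hpos i)) haτ hΦ
  refine (hτ.trans ?_).trans haτ'.symm
  have hscale := Measure.integral_comp_smul_of_nonneg volume
    (fun ξ => normalDensity (fun i => a * τ i) ξ * Φ ξ) √a (hR := Real.sqrt_nonneg a)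
  simp_rw [normalDensity_const_mul τ ha, mul_assoc, integral_const_mul, Module.finrank_fin_fun,
    smul_eq_mul] at hscale
  exact mul_left_cancel₀ (by positivity) hscale

end IsWienerMeasure

def rightRiemannSum (g : ℝ → ℝ) (n : ℕ) : ℝ := (∑ j, g (unitGrid n j)) / (n + 1)

lemma abs_mul_sub_integral_le {g : ℝ → ℝ} {a b ε : ℝ} (hab : a ≤ b)
    (hg : ContinuousOn g (Set.Icc a b)) (hε : ∀ s ∈ Set.Icc a b, |g b - g s| ≤ ε) :
    |(b - a) * g b - ∫ s in a..b, g s| ≤ ε * (b - a) := by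
  have hint : IntervalIntegrable g volume a b :=
    hg.intervalIntegrable_of_Icc hab
  rw [← smul_eq_mul, ← intervalIntegral.integral_const, ← intervalIntegral.integral_sub
    intervalIntegrable_const hint, ← Real.norm_eq_abs, ← abs_of_nonneg (sub_nonneg.2 hab)]
  refine intervalIntegral.norm_integral_le_of_norm_le_const fun s hs => ?_
  rw [Set.uIoc_of_le hab] at hs
  exact hε s (Set.Ioc_subset_Icc_self hs)

lemma abs_rightRiemannSum_sub_integral_le {g : ℝ → ℝ} (hg : ContinuousOn g (Set.Icc 0 1))
    {n : ℕ} {ε : ℝ}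
    (hε : ∀ s ∈ Set.Icc (0:ℝ) 1, ∀ s' ∈ Set.Icc (0:ℝ) 1, |s - s'| ≤ 1 / (n + 1) →
      |g s - g s'| ≤ ε) :
    |rightRiemannSum g n - ∫ s in (0:ℝ)..1, g s| ≤ ε := by
  set a : ℕ → ℝ := fun k => k / (n + 1) with ha
  have hstep (k : ℕ) : a (k + 1) - a k = 1 / (n + 1) := by
    simp only [ha]; push_cast; field_simp; ring
  have hmono (k : ℕ) : a k ≤ a (k + 1) := by
    have := hstep k; have : (0:ℝ) < 1 / (n + 1) := by positivity
    linarith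
  have hsub {k : ℕ} (hk : k ∈ Finset.range (n + 1)) : Set.Icc (a k) (a (k + 1)) ⊆ Set.Icc 0 1 := by
    have hk : (k:ℝ) + 1 ≤ n + 1 := by exact_mod_cast Finset.mem_range.1 hk
    refine Set.Icc_subset_Icc (by positivity) ?_
    simp only [ha]; push_cast
    exact (div_le_one (by positivity)).2 hk
  have hsplit : ∫ s in (0:ℝ)..1, g s = ∑ k ∈ Finset.range (n + 1), ∫ s in a k..a (k + 1), g s := by
    rw [intervalIntegral.sum_integral_adjacent_intervals fun k hk =>
      (hg.mono (hsub (Finset.mem_range.2 hk))).intervalIntegrable_of_Icc (hmono k)]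
    simp [ha, Nat.cast_add_one_ne_zero]
  have hsum : rightRiemannSum g n =
      ∑ k ∈ Finset.range (n + 1), (a (k + 1) - a k) * g (a (k + 1)) := by
    simp only [rightRiemannSum, Finset.sum_div, unitGrid, ha]
    rw [Fin.sum_univ_eq_sum_range (fun k => g ((k + 1) / (n + 1)) / (n + 1))]
    push_cast
    exact Finset.sum_congr rfl fun k _ => by ring
  rw [hsum, hsplit, ← Finset.sum_sub_distrib]
  calc _ ≤ ∑ k ∈ Finset.range (n + 1), ε * (a (k + 1) - a k) := by
        refine (Finset.abs_sum_le_sum_abs _ _).trans (Finset.sum_le_sum fun k hk => ?_)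
        refine abs_mul_sub_integral_le (hmono k) (hg.mono (hsub hk)) fun s hs => ?_
        refine hε _ (hsub hk ⟨hmono k, le_rfl⟩) _ (hsub hk hs) ?_
        rw [abs_of_nonneg (by linarith [hs.2]), ← hstep k]
        linarith [hs.1]
    _ = ε := by
        rw [← Finset.mul_sum, Finset.sum_range_sub]
        simp [ha, Nat.cast_add_one_ne_zero]

lemma tendsto_rightRiemannSum {g : ℝ → ℝ} (hg : ContinuousOn g (Set.Icc 0 1)) :
    Tendsto (rightRiemannSum g) atTop (𝓝 (∫ s in (0:ℝ)..1, g s)) := by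
  rw [Metric.tendsto_atTop]
  intro ε hε
  obtain ⟨δ, hδ, hg_unif⟩ := Metric.uniformContinuousOn_iff_le.mp
    (isCompact_Icc.uniformContinuousOn_of_continuous hg) (ε / 2) (by positivity)
  obtain ⟨N, hN⟩ := exists_nat_one_div_lt hδ
  refine ⟨N, fun n hn => ?_⟩
  have hmesh : 1 / ((n:ℝ) + 1) ≤ δ :=
    le_trans (by gcongr) hN.le
  rw [Real.dist_eq]
  refine (abs_rightRiemannSum_sub_integral_le hg fun s hs s' hs' hss' => ?_).trans_lt
    (half_lt_self hε)
  exact hg_unif s hs s' hs' (hss'.trans hmesh)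

lemma integral_eq_of_tendsto_of_integral_eq {α E : Type*} [MeasurableSpace α]
    [NormedAddCommGroup E] [NormedSpace ℝ E] {μ : Measure α} [IsFiniteMeasure μ]
    {F G : ℕ → α → E} {f g : α → E} {C : ℝ}
    (hF : ∀ n, AEStronglyMeasurable (F n) μ) (hG : ∀ n, AEStronglyMeasurable (G n) μ)
    (hFC : ∀ n a, ‖F n a‖ ≤ C) (hGC : ∀ n a, ‖G n a‖ ≤ C)
    (hFf : ∀ a, Tendsto (F · a) atTop (𝓝 (f a))) (hGg : ∀ a, Tendsto (G · a) atTop (𝓝 (g a)))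
    (hFG : ∀ n, ∫ a, F n a ∂μ = ∫ a, G n a ∂μ) :
    ∫ a, f a ∂μ = ∫ a, g a ∂μ := by
  have hlim {H : ℕ → α → E} {h : α → E} (hH : ∀ n, AEStronglyMeasurable (H n) μ)
      (hHC : ∀ n a, ‖H n a‖ ≤ C) (hHh : ∀ a, Tendsto (H · a) atTop (𝓝 (h a))) :
      Tendsto (fun n => ∫ a, H n a ∂μ) atTop (𝓝 (∫ a, h a ∂μ)) :=
    tendsto_integral_of_dominated_convergence (fun _ => C) hH (integrable_const C)
      (fun n => ae_of_all _ (hHC n)) (ae_of_all _ hHh)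
  exact tendsto_nhds_unique ((hlim hF hFC hFf).congr hFG) (hlim hG hGC hGg)

section FeynmanKac

variable (v₀ : ℝ → ℝ) (c : ℝ → ℝ → ℝ) (t x : ℝ)

/-- The integrand of `wienerFK`, as a functional of the rescaled path `f = √(2t) w`. -/
def fkIntegrand (f : ℝ → ℝ) : ℝ :=
  v₀ (f 1 + x) * exp (-(t * ∫ s in (0:ℝ)..1, (x + f s) ^ 2)) *
    exp (-(t * ∫ s in (0:ℝ)..1, c (t * (1 - s)) (f s + x)))

/-- `fkIntegrand` with its time integrals replaced by Riemann sums, as a function of the values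
`ξ j` of the path at the points `unitGrid n j`. -/
def fkCylinder (n : ℕ) (ξ : Fin (n + 1) → ℝ) : ℝ :=
  v₀ (ξ (Fin.last n) + x) * exp (-(t * ((∑ j, (x + ξ j) ^ 2) / (n + 1)))) *
    exp (-(t * ((∑ j, c (t * (1 - unitGrid n j)) (ξ j + x)) / (n + 1))))

variable {v₀ c t x}

lemma fkCylinder_unitGrid (f : ℝ → ℝ) (n : ℕ) :
    fkCylinder v₀ c t x n (fun j => f (unitGrid n j)) =
      v₀ (f 1 + x) * exp (-(t * rightRiemannSum (fun s => (x + f s) ^ 2) n)) *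
        exp (-(t * rightRiemannSum (fun s => c (t * (1 - s)) (f s + x)) n)) := by
  simp only [fkCylinder, rightRiemannSum, unitGrid_last]

lemma tendsto_fkCylinder_unitGrid
    (hc : ContinuousOn (fun p : ℝ × ℝ => c p.1 p.2) (Set.Ici 0 ×ˢ Set.univ)) (ht : 0 ≤ t)
    {f : ℝ → ℝ} (hf : Continuous f) :
    Tendsto (fun n => fkCylinder v₀ c t x n (fun j => f (unitGrid n j))) atTop
      (𝓝 (fkIntegrand v₀ c t x f)) := by
  have hsq : ContinuousOn (fun s => (x + f s) ^ 2) (Set.Icc 0 1) := by fun_prop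
  have hpath : Continuous fun s : ℝ => (t * (1 - s), f s + x) := by fun_prop
  have hcf : ContinuousOn (fun s => c (t * (1 - s)) (f s + x)) (Set.Icc 0 1) :=
    hc.comp hpath.continuousOn fun s hs => ⟨mul_nonneg ht (sub_nonneg.2 hs.2), trivial⟩
  simp only [fkCylinder_unitGrid]
  exact (tendsto_const_nhds.mul
    (((tendsto_rightRiemannSum hsq).const_mul t).neg.rexp)).mul
    (((tendsto_rightRiemannSum hcf).const_mul t).neg.rexp)

lemma continuous_fkCylinder (hv₀ : Continuous v₀)
    (hc : ContinuousOn (fun p : ℝ × ℝ => c p.1 p.2) (Set.Ici 0 ×ˢ Set.univ)) (ht : 0 ≤ t)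
    (n : ℕ) : Continuous (fkCylinder v₀ c t x n) := by
  have hcj (j : Fin (n + 1)) :
      Continuous fun ξ : Fin (n + 1) → ℝ => c (t * (1 - unitGrid n j)) (ξ j + x) :=
    hc.comp_continuous (f := fun ξ : Fin (n + 1) → ℝ => (t * (1 - unitGrid n j), ξ j + x))
      (by fun_prop) fun _ => ⟨mul_nonneg ht (sub_nonneg.2 (unitGrid_le_one n j)), trivial⟩
  have hsum : Continuous fun ξ : Fin (n + 1) → ℝ => ∑ j, c (t * (1 - unitGrid n j)) (ξ j + x) :=
    continuous_finsetSum _ fun j _ => hcj j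
  unfold fkCylinder
  fun_prop

lemma abs_fkCylinder_le {Mv Mc : ℝ} (hMv : ∀ y, |v₀ y| ≤ Mv)
    (hMc : ∀ s ∈ Set.Ici (0:ℝ), ∀ y, |c s y| ≤ Mc) (ht : 0 ≤ t) (n : ℕ)
    (ξ : Fin (n + 1) → ℝ) :
    |fkCylinder v₀ c t x n ξ| ≤ Mv * exp (t * Mc) := by
  have hsq : exp (-(t * ((∑ j, (x + ξ j) ^ 2) / (n + 1)))) ≤ 1 :=
    exp_le_one_iff.2 (neg_nonpos.2 (by positivity))
  have hc_avg : -Mc ≤ (∑ j, c (t * (1 - unitGrid n j)) (ξ j + x)) / (n + 1) := by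
    rw [le_div_iff₀ (by positivity)]
    calc -Mc * (n + 1) = ∑ _j : Fin (n + 1), -Mc := by simp; ring
      _ ≤ _ := Finset.sum_le_sum fun j _ => neg_le_of_abs_le
          (hMc _ (mul_nonneg ht (sub_nonneg.2 (unitGrid_le_one n j))) _)
  have hc_exp : exp (-(t * ((∑ j, c (t * (1 - unitGrid n j)) (ξ j + x)) / (n + 1)))) ≤
      exp (t * Mc) :=
    exp_le_exp.2 (by nlinarith)
  rw [fkCylinder, abs_mul, abs_mul, abs_exp, abs_exp]
  have hMv0 : 0 ≤ Mv := (abs_nonneg _).trans (hMv 0)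
  calc _ ≤ Mv * 1 * exp (t * Mc) :=
        mul_le_mul (mul_le_mul (hMv _) hsq (exp_pos _).le hMv0) hc_exp (exp_pos _).le
          (by positivity)
    _ = Mv * exp (t * Mc) := by ring

lemma fkIntegrand_comp_mul (f : ℝ → ℝ) :
    fkIntegrand v₀ c t x (fun s => f (2 * t * s)) =
      v₀ (f (2 * t) + x) * exp (-(1 / 2 * ∫ s in (0:ℝ)..(2 * t), (x + f s) ^ 2)) *
        exp (-(1 / 2 * ∫ s in (0:ℝ)..(2 * t), c (t - s / 2) (f s + x))) := by
  have hrescale (g : ℝ → ℝ) :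
      t * ∫ s in (0:ℝ)..1, g (2 * t * s) = 1 / 2 * ∫ s in (0:ℝ)..(2 * t), g s := by
    have := intervalIntegral.smul_integral_comp_mul_left g (2 * t) (a := 0) (b := 1)
    rw [smul_eq_mul, mul_zero, mul_one] at this
    rw [← this]
    ring
  have htime (s : ℝ) : t * (1 - s) = t - 2 * t * s / 2 := by ring
  simp only [fkIntegrand, mul_one, htime,
    hrescale fun s => (x + f s) ^ 2, hrescale fun s => c (t - s / 2) (f s + x)]

end FeynmanKac

theorem wienerFK_alternate_expression_general
    (μ : Measure CW) (hμ : IsWienerMeasure μ)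
    (v₀ : ℝ → ℝ) (hv₀c : Continuous v₀) (hv₀b : ∃ M : ℝ, ∀ x : ℝ, |v₀ x| ≤ M)
    (c : ℝ → ℝ → ℝ)
    (hc_cont : ContinuousOn (fun p : ℝ × ℝ => c p.1 p.2) (Set.Ici 0 ×ˢ Set.univ))
    (hc_bdd : ∃ M : ℝ, ∀ s ∈ Set.Ici (0:ℝ), ∀ x : ℝ, |c s x| ≤ M) :
    ∃ t₀ : ℝ, 0 < t₀ ∧ 2 * t₀ ≤ 1 ∧ ∀ t : ℝ, 0 < t → t ≤ t₀ → ∀ x : ℝ,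
      wienerFK μ v₀ c t x =
        ∫ w : CW,
          v₀ (w.eval (2 * t) + x) *
            Real.exp (-(1 / 2 * ∫ s in (0:ℝ)..(2 * t), (x + w.eval s) ^ 2)) *
            Real.exp (-(1 / 2 * ∫ s in (0:ℝ)..(2 * t),
              c (t - s / 2) (w.eval s + x))) ∂μ := by
  obtain ⟨Mv, hMv⟩ := hv₀b
  obtain ⟨Mc, hMc⟩ := hc_bdd
  have := hμ.prob
  refine ⟨1 / 2, by norm_num, by norm_num, fun t ht ht₀ x => ?_⟩
  have hcyl_meas {n : ℕ} {ξ : CW → Fin (n + 1) → ℝ} (hξ : Continuous ξ) :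
      AEStronglyMeasurable (fun w => fkCylinder v₀ c t x n (ξ w)) μ :=
    ((continuous_fkCylinder hv₀c hc_cont ht.le n).comp hξ).aestronglyMeasurable
  have hcyl_bdd {n : ℕ} (ξ : Fin (n + 1) → ℝ) := abs_fkCylinder_le (x := x) hMv hMc ht.le n ξ
  calc wienerFK μ v₀ c t x = ∫ w, fkIntegrand v₀ c t x (fun s => √(2 * t) * w.eval s) ∂μ := rfl
    _ = ∫ w, fkIntegrand v₀ c t x (fun s => w.eval (2 * t * s)) ∂μ := by
      refine integral_eq_of_tendsto_of_integral_eq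
        (fun n => hcyl_meas (by fun_prop))
        (fun n => hcyl_meas (by fun_prop))
        (fun n w => hcyl_bdd _) (fun n w => hcyl_bdd _)
        (fun w => tendsto_fkCylinder_unitGrid hc_cont ht.le (by fun_prop))
        (fun w => tendsto_fkCylinder_unitGrid hc_cont ht.le (by fun_prop))
        (fun n => hμ.integral_comp_sqrt_mul_eval (strictMono_unitGrid n) (unitGrid_pos n)
          (unitGrid_le_one n) (by positivity) (fun j => ?_)
          (continuous_fkCylinder hv₀c hc_cont ht.le n).measurable)
      nlinarith [unitGrid_le_one n j, unitGrid_pos n j]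
    _ = _ := by simp_rw [fkIntegrand_comp_mul]

/-- **Alternate Feynman–Kac expression.** For sufficiently small `t > 0` (in particular
`2t ≤ 1`), the Feynman–Kac type Wiener integral `v(t,x)` also equals
`∫_{C_W} v₀(w(2t)+x) exp(−(1/2)∫₀^{2t} (x+w(s))² ds)
  exp(−(1/2)∫₀^{2t} c(t−s/2, w(s)+x) ds) dm_W(w)`. -/
theorem wienerFK_alternate_expression
    (μ : Measure CW) (hμ : IsWienerMeasure μ)
    (v₀ : ℝ → ℝ) (hv₀c : Continuous v₀) (hv₀b : ∃ M : ℝ, ∀ x : ℝ, |v₀ x| ≤ M)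
    (hv₀0 : Tendsto v₀ (cocompact ℝ) (𝓝 0))
    (c : ℝ → ℝ → ℝ)
    (hc_cont : ContinuousOn (fun p : ℝ × ℝ => c p.1 p.2) (Set.Ici 0 ×ˢ Set.univ))
    (hc_bdd : ∃ M : ℝ, ∀ s ∈ Set.Ici (0:ℝ), ∀ x : ℝ, |c s x| ≤ M)
    (hc_C1 : ContDiffOn ℝ 1 (fun p : ℝ × ℝ => c p.1 p.2) (Set.Ioi 0 ×ˢ Set.univ))
    (hc_space : ∀ j ≤ 4,
      ContinuousOn (fun p : ℝ × ℝ => iteratedDeriv j (fun y => c p.1 y) p.2)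
        (Set.Ioi 0 ×ˢ Set.univ) ∧
      ∃ M : ℝ, ∀ s > (0:ℝ), ∀ x : ℝ, |iteratedDeriv j (fun y => c s y) x| ≤ M) :
    ∃ t₀ : ℝ, 0 < t₀ ∧ 2 * t₀ ≤ 1 ∧ ∀ t : ℝ, 0 < t → t ≤ t₀ → ∀ x : ℝ,
      wienerFK μ v₀ c t x =
        ∫ w : CW,
          v₀ (w.eval (2 * t) + x) *
            Real.exp (-(1 / 2 * ∫ s in (0:ℝ)..(2 * t), (x + w.eval s) ^ 2)) *
            Real.exp (-(1 / 2 * ∫ s in (0:ℝ)..(2 * t),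
              c (t - s / 2) (w.eval s + x))) ∂μ :=
  wienerFK_alternate_expression_general μ hμ v₀ hv₀c hv₀b c hc_cont hc_bdd
end
end
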